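/- Let Ω ⊆ ℂ^g be open and σ : Ω → ℂ analytic, and fix indices i, j, k, l, m ∈ {1,…,g}. Define on {u ∈ Ω : σ(u) ≠ 0} the function B_{ijklm} := ℘_{ij}℘_{klm} + (1/3)·(℘_{jk}℘_{ilm} + ℘_{jl}℘_{ikm} + ℘_{jm}℘_{ikl} − 2℘_{kl}℘_{ijm} − 2℘_{km}℘_{ijl} − 2℘_{lm}℘_{ijk}). Then there exists an analytic function G : Ω → ℂ such that σ(u)³·B_{ijklm}(u) = G(u) for all u ∈ Ω with σ(u) ≠ 0; that is, although each individual term of B_{ijklm} has poles of order 5 along the zero set of σ, both the order-5 and order-4 poles cancel and B_{ijklm} has poles of order at most 3. -/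

import Mathlib

/-!
Write `σ²℘_{ab}` and `σ³℘_{abc}` as polynomials in `σ` and its partial derivatives of order
at most three. Then `σ⁵B_{ijklm}` is a polynomial in these jets, and expanding it in powers
of `σ` the coefficients of `σ⁰` (a multiple of `∂ᵢσ ∂ⱼσ ∂ₖσ ∂ₗσ ∂ₘσ`) and of `σ¹` cancel
identically in the combination defining `B`. Hence `σ⁵B = σ²G` with `G` a polynomial in
derivatives of `σ`, which is analytic wherever `σ` is.
-/

/-- Partial derivative in the `i`-th coordinate direction of a function on `ℂ^g`. -/
noncomputable def pd {g : ℕ} (i : Fin g) (f : (Fin g → ℂ) → ℂ) : (Fin g → ℂ) → ℂ :=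
  fun u => fderiv ℂ f u (Pi.single i 1)

/-- The 2-index Kleinian ℘-function `℘_{ij} = −∂ᵢ∂ⱼ log σ`, written out as
`(∂ᵢσ·∂ⱼσ − σ·∂ᵢ∂ⱼσ)/σ²`. -/
noncomputable def wp2 {g : ℕ} (σ : (Fin g → ℂ) → ℂ) (i j : Fin g) :
    (Fin g → ℂ) → ℂ :=
  fun u => (pd i σ u * pd j σ u - σ u * pd i (pd j σ) u) / (σ u) ^ 2

/-- The 3-index Kleinian ℘-function `℘_{ijk} = ∂ₖ℘_{ij}`. -/
noncomputable def wp3 {g : ℕ} (σ : (Fin g → ℂ) → ℂ) (i j k : Fin g) :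
    (Fin g → ℂ) → ℂ :=
  pd k (wp2 σ i j)

/-- The function `B_{ijklm} = ℘_{ij}℘_{klm} + (1/3)(℘_{jk}℘_{ilm} + ℘_{jl}℘_{ikm}
+ ℘_{jm}℘_{ikl} − 2℘_{kl}℘_{ijm} − 2℘_{km}℘_{ijl} − 2℘_{lm}℘_{ijk})`. -/
noncomputable def Bfun {g : ℕ} (σ : (Fin g → ℂ) → ℂ) (i j k l m : Fin g) :
    (Fin g → ℂ) → ℂ :=
  fun u => wp2 σ i j u * wp3 σ k l m u
    + (1/3 : ℂ) * (wp2 σ j k u * wp3 σ i l m u + wp2 σ j l u * wp3 σ i k m u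
      + wp2 σ j m u * wp3 σ i k l u - 2 * wp2 σ k l u * wp3 σ i j m u
      - 2 * wp2 σ k m u * wp3 σ i j l u - 2 * wp2 σ l m u * wp3 σ i j k u)

section Algebra

variable {ι K : Type*} [Field K]

/-- The combination defining `B_{ijklm}`, with `F x y z w v` in place of `℘_{xy}℘_{zwv}`. -/
def bCombination (F : ι → ι → ι → ι → ι → K) (i j k l m : ι) : K :=
  F i j k l m + (1/3 : K) * (F j k i l m + F j l i k m + F j m i k l - 2 * F k l i j m
    - 2 * F k m i j l - 2 * F l m i j k)

lemma bCombination_div (F : ι → ι → ι → ι → ι → K) (c : K) (i j k l m : ι) :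
    bCombination (fun x y z w v => F x y z w v / c) i j k l m = bCombination F i j k l m / c := by
  simp only [bCombination]; ring

variable (s : K) (d : ι → K) (h : ι → ι → K) (t : ι → ι → ι → K)

/-! With `s = σ`, `d a = ∂ₐσ`, `h a b = ∂ₐ∂_bσ` and `t a b c = ∂_c∂ₐ∂_bσ`, the next two
definitions are `σ²℘_{ab}` and `σ³℘_{abc}`. -/

def wp2Num (a b : ι) : K := d a * d b - s * h a b

def wp3Num (a b c : ι) : K :=
  -2 * d a * d b * d c + s * (h a b * d c + h a c * d b + h b c * d a) - s ^ 2 * t a b c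

/-- The `s²`- and `s³`-parts of `wp2Num x y * wp3Num z w v`, divided by `s²`. -/
def bReduced (x y z w v : ι) : K :=
  s * h x y * t z w v - d x * d y * t z w v - h x y * (h z w * d v + h z v * d w + h w v * d z)

lemma bCombination_wp2Num_mul_wp3Num (h3 : (3 : K) ≠ 0) (i j k l m : ι) :
    bCombination (fun x y z w v => wp2Num s d h x y * wp3Num s d h t z w v) i j k l m
      = s ^ 2 * bCombination (bReduced s d h t) i j k l m := by
  have pole5 : bCombination (fun x y z w v => d x * d y * d z * d w * d v) i j k l m = 0 := by
    simp only [bCombination]; field_simp; ring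
  have pole4 : bCombination (fun x y z w v => d x * d y * (h z w * d v + h z v * d w + h w v * d z)
      + 2 * h x y * d z * d w * d v) i j k l m = 0 := by
    simp only [bCombination]; field_simp; ring
  simp only [bCombination, wp2Num, wp3Num, bReduced] at *
  -- termwise, `wp2Num * wp3Num = -2 d⁵ + s * (summand of pole4) + s² * bReduced`
  linear_combination (-2) * pole5 + s * pole4

end Algebra

section PartialDerivatives

variable {g : ℕ} {f f' : (Fin g → ℂ) → ℂ} {u : Fin g → ℂ} (k : Fin g)

@[fun_prop]
lemma AnalyticAt.pd (hf : AnalyticAt ℂ f u) : AnalyticAt ℂ (pd k f) u := by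
  unfold _root_.pd
  exact ((ContinuousLinearMap.apply ℂ ℂ (Pi.single k (1 : ℂ))).analyticAt _).comp hf.fderiv

lemma pd_sub (hf : DifferentiableAt ℂ f u) (hf' : DifferentiableAt ℂ f' u) :
    pd k (fun y => f y - f' y) u = pd k f u - pd k f' u := by
  simp [pd, fderiv_fun_sub hf hf']

lemma pd_mul (hf : DifferentiableAt ℂ f u) (hf' : DifferentiableAt ℂ f' u) :
    pd k (fun y => f y * f' y) u = pd k f u * f' u + f u * pd k f' u := by
  simp [pd, fderiv_fun_mul hf hf']
  ring

lemma pd_pow (n : ℕ) (hf : DifferentiableAt ℂ f u) :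
    pd k (fun y => f y ^ n) u = n * f u ^ (n - 1) * pd k f u := by
  simp [pd, fderiv_fun_pow n hf]

lemma pd_inv (hf : DifferentiableAt ℂ f u) (h0 : f u ≠ 0) :
    pd k (fun y => (f y)⁻¹) u = -pd k f u / f u ^ 2 := by
  have hinv := (hasFDerivAt_inv h0).comp u hf.hasFDerivAt
  simp only [pd]
  rw [show (fun y => (f y)⁻¹) = (fun x => x⁻¹) ∘ f from rfl, hinv.fderiv]
  simp [div_eq_mul_inv]

lemma pd_div (hf : DifferentiableAt ℂ f u) (hf' : DifferentiableAt ℂ f' u) (h0 : f' u ≠ 0) :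
    pd k (fun y => f y / f' y) u = (pd k f u * f' u - f u * pd k f' u) / f' u ^ 2 := by
  simp only [div_eq_mul_inv]
  rw [pd_mul k hf (hf'.fun_inv h0), pd_inv k hf' h0]
  field_simp
  ring

lemma pd_comm (hf : AnalyticAt ℂ f u) (a b : Fin g) : pd a (pd b f) u = pd b (pd a f) u := by
  have hdf : DifferentiableAt ℂ (fderiv ℂ f) u := hf.fderiv.differentiableAt
  have hsecond (v w : Fin g → ℂ) :
      fderiv ℂ (fun y => fderiv ℂ f y v) u w = fderiv ℂ (fderiv ℂ f) u w v := by
    rw [fderiv_clm_apply hdf (differentiableAt_const v)]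
    simp
  change fderiv ℂ (fun y => fderiv ℂ f y (Pi.single b 1)) u (Pi.single a 1)
    = fderiv ℂ (fun y => fderiv ℂ f y (Pi.single a 1)) u (Pi.single b 1)
  rw [hsecond, hsecond]
  exact hf.contDiffAt.isSymmSndFDerivAt_of_omega _ _

end PartialDerivatives

section Kleinian

variable {g : ℕ} {σ : (Fin g → ℂ) → ℂ} {u : Fin g → ℂ}

lemma wp2_eq_wp2Num_div (a b : Fin g) :
    wp2 σ a b u = wp2Num (σ u) (pd · σ u) (fun a b => pd a (pd b σ) u) a b / σ u ^ 2 := rfl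

lemma wp3_eq_wp3Num_div (hσ : AnalyticAt ℂ σ u) (h0 : σ u ≠ 0) (a b c : Fin g) :
    wp3 σ a b c u = wp3Num (σ u) (pd · σ u) (fun a b => pd a (pd b σ) u)
      (fun a b c => pd c (pd a (pd b σ)) u) a b c / σ u ^ 3 := by
  have dσ := hσ.differentiableAt
  have da := (hσ.pd a).differentiableAt
  have db := (hσ.pd b).differentiableAt
  have dab := ((hσ.pd b).pd a).differentiableAt
  unfold wp3 wp2
  rw [pd_div c ((da.fun_mul db).fun_sub (dσ.fun_mul dab)) (dσ.fun_pow 2) (pow_ne_zero 2 h0),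
    pd_sub c (da.fun_mul db) (dσ.fun_mul dab), pd_mul c da db, pd_mul c dσ dab, pd_pow c 2 dσ,
    pd_comm hσ c a, pd_comm hσ c b]
  simp only [wp3Num]
  field_simp
  ring

lemma Bfun_eq_bCombination (i j k l m : Fin g) :
    Bfun σ i j k l m u
      = bCombination (fun x y z w v => wp2 σ x y u * wp3 σ z w v u) i j k l m := by
  simp only [Bfun, bCombination]; ring

end Kleinian

theorem stmt5_general {g : ℕ} (Ω : Set (Fin g → ℂ))
    (σ : (Fin g → ℂ) → ℂ) (hσ : AnalyticOnNhd ℂ σ Ω)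
    (i j k l m : Fin g) :
    ∃ G : (Fin g → ℂ) → ℂ, AnalyticOnNhd ℂ G Ω ∧
      ∀ u ∈ Ω, σ u ≠ 0 → (σ u) ^ 3 * Bfun σ i j k l m u = G u := by
  refine ⟨fun u => bCombination (bReduced (σ u) (pd · σ u) (fun a b => pd a (pd b σ) u)
    (fun a b c => pd c (pd a (pd b σ)) u)) i j k l m, fun u hu => ?_, fun u hu h0 => ?_⟩
  · have hσu := hσ u hu
    simp only [bCombination, bReduced]
    fun_prop
  · simp only [Bfun_eq_bCombination, wp2_eq_wp2Num_div, wp3_eq_wp3Num_div (hσ u hu) h0,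
      div_mul_div_comm, ← pow_add]
    rw [bCombination_div, bCombination_wp2Num_mul_wp3Num _ _ _ _ three_ne_zero]
    field_simp
    ring

/-- For `σ` analytic on an open `Ω ⊆ ℂ^g` and any indices `i,j,k,l,m`, there is
a function `G` analytic on all of `Ω` with `σ³·B_{ijklm} = G` on `{σ ≠ 0}`:
although each individual term of `B_{ijklm}` has poles of order 5 along the zero
set of `σ`, the order-5 and order-4 poles cancel and `B_{ijklm}` has poles of
order at most 3. -/
theorem stmt5 {g : ℕ} (Ω : Set (Fin g → ℂ)) (hΩopen : IsOpen Ω)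
    (σ : (Fin g → ℂ) → ℂ) (hσ : AnalyticOnNhd ℂ σ Ω)
    (i j k l m : Fin g) :
    ∃ G : (Fin g → ℂ) → ℂ, AnalyticOnNhd ℂ G Ω ∧
      ∀ u ∈ Ω, σ u ≠ 0 → (σ u) ^ 3 * Bfun σ i j k l m u = G u :=
  stmt5_general Ω σ hσ i j k l m
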